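/- arXiv:1006.2942 — 3 statements merged into one kernel-verified Lean document; each statement's English description precedes it below -/
import Mathlib

section
/- Let Ω ⊆ ℝ³ be measurable, Φ : Ω → ℝ measurable with Φ ≥ 0 and e^{-Φ} ∈ L¹(Ω). Suppose η ≥ 0 is integrable with ∫_Ω η log η dx + ∫_Ω Φ η dx ≤ C. Then for every ε > 0 there exists R > 0, depending only on C, ε and Φ, such that ∫_{Ω ∩ {|x| > R}} η(x) dx < ε. -/
/-!
Young's inequality for `a log a`, namely `a u ≤ a log a + exp (u - 1)`, taken at `u = L - Φ`
gives `L η ≤ (η log η + Φ η + exp (-1 - Φ)) + exp (L - 1) exp (-Φ)`, and taken at `u = -Φ` shows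
that the bracket is nonnegative, so its integral over a tail is at most `C + exp (-1) ∫ exp (-Φ)`.
Thus `L ∫_{tail} η ≤ C + exp (-1) ∫ exp (-Φ) + exp (L - 1) ∫_{tail} exp (-Φ)`: first take `L`
large, then the tail far enough out that the last term is small, since `exp (-Φ)` is integrable.
-/

open MeasureTheory Real Filter Topology

theorem Real.mul_le_mul_log_add_exp_sub_one {a : ℝ} (ha : 0 ≤ a) (t : ℝ) :
    a * t ≤ a * log a + exp (t - 1) := by
  rcases ha.eq_or_lt with rfl | ha
  · simp [(exp_pos _).le]
  · -- `log x ≤ x - 1` at `x = exp (t - 1) / a`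
    have h := log_le_sub_one_of_pos (div_pos (exp_pos (t - 1)) ha)
    rw [log_div (exp_pos _).ne' ha.ne', log_exp, le_sub_iff_add_le, le_div_iff₀ ha] at h
    linarith

theorem mul_setIntegral_le_entropy_add {α : Type*} [MeasurableSpace α] {μ : Measure α}
    {s t : Set α} {η Φ : α → ℝ} (hs : MeasurableSet s) (ht : MeasurableSet t) (hts : t ⊆ s)
    (hη0 : ∀ x ∈ s, 0 ≤ η x) (hη : IntegrableOn η s μ)
    (hηlog : IntegrableOn (fun x => η x * log (η x)) s μ)
    (hΦη : IntegrableOn (fun x => Φ x * η x) s μ) (hexp : IntegrableOn (fun x => exp (-Φ x)) s μ)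
    (L : ℝ) :
    L * ∫ x in t, η x ∂μ ≤ (∫ x in s, η x * log (η x) ∂μ) + (∫ x in s, Φ x * η x ∂μ)
      + exp (-1) * (∫ x in s, exp (-Φ x) ∂μ) + exp (L - 1) * ∫ x in t, exp (-Φ x) ∂μ := by
  set g : α → ℝ := fun x => η x * log (η x) + Φ x * η x + exp (-1) * exp (-Φ x)
  have hg : IntegrableOn g s μ := (hηlog.add hΦη).add (hexp.const_mul _)
  have young (x : α) (hx : x ∈ s) (u : ℝ) :
      η x * u ≤ η x * log (η x) + Φ x * η x + exp (u - 1) * exp (-Φ x) := by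
    have := mul_le_mul_log_add_exp_sub_one (hη0 x hx) (u - Φ x)
    rw [show u - Φ x - 1 = u - 1 + -Φ x by ring, exp_add] at this
    linarith
  have hg0 : ∀ x ∈ s, 0 ≤ g x := fun x hx => by
    simpa [g, sub_eq_add_neg] using young x hx 0
  have hpt : ∀ x ∈ t, L * η x ≤ g x + exp (L - 1) * exp (-Φ x) := fun x hx => by
    have := young x (hts hx) L
    have : 0 ≤ exp (-1) * exp (-Φ x) := by positivity
    simp only [g]
    linarith
  have hexp_t := hexp.mono_set hts
  calc L * ∫ x in t, η x ∂μ = ∫ x in t, L * η x ∂μ := (integral_const_mul _ _).symm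
    _ ≤ ∫ x in t, (g x + exp (L - 1) * exp (-Φ x)) ∂μ :=
      setIntegral_mono_on ((hη.mono_set hts).const_mul _)
        ((hg.mono_set hts).add (hexp_t.const_mul _)) ht hpt
    _ = (∫ x in t, g x ∂μ) + exp (L - 1) * ∫ x in t, exp (-Φ x) ∂μ := by
      rw [integral_add (hg.mono_set hts) (hexp_t.const_mul _), integral_const_mul]
    _ ≤ (∫ x in s, g x ∂μ) + exp (L - 1) * ∫ x in t, exp (-Φ x) ∂μ := by
      gcongr ?_ + _
      exact setIntegral_mono_set hg ((ae_restrict_mem hs).mono hg0) hts.eventuallyLE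
    _ = _ := by
      rw [integral_add (f := fun x => η x * log (η x) + Φ x * η x) (hηlog.add hΦη)
        (hexp.const_mul _), integral_add hηlog hΦη, integral_const_mul]

theorem tendsto_setIntegral_inter_norm_gt {E G : Type*} [SeminormedAddCommGroup E]
    [MeasurableSpace E] [OpensMeasurableSpace E] [NormedAddCommGroup G] [NormedSpace ℝ G]
    {μ : Measure E} {s : Set E} {f : E → G} (hf : IntegrableOn f s μ) :
    Tendsto (fun R : ℝ => ∫ x in s ∩ {x | R < ‖x‖}, f x ∂μ) atTop (𝓝 0) := by
  have hmeas (R : ℝ) : MeasurableSet {x : E | R < ‖x‖} :=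
    (isOpen_lt continuous_const continuous_norm).measurableSet
  simp_rw [← setIntegral_indicator (hmeas _)]
  rw [← integral_zero E G]
  refine tendsto_integral_filter_of_dominated_convergence (fun x => ‖f x‖)
    (.of_forall fun R => hf.aestronglyMeasurable.indicator (hmeas R))
    (.of_forall fun R => .of_forall fun x => norm_indicator_le_norm_self _ _) hf.norm
    (.of_forall fun x => tendsto_const_nhds.congr' ?_)
  filter_upwards [eventually_ge_atTop ‖x‖] with R hR
  exact (Set.indicator_of_notMem (s := {x : E | R < ‖x‖}) (not_lt.mpr hR) f).symm

theorem stmt_3_general (Ω : Set (EuclideanSpace ℝ (Fin 3))) (hΩ : MeasurableSet Ω)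
    (Φ : EuclideanSpace ℝ (Fin 3) → ℝ)
    (hexp : IntegrableOn (fun x => Real.exp (-Φ x)) Ω) (C : ℝ) :
    ∀ ε > 0, ∃ R > 0, ∀ η : EuclideanSpace ℝ (Fin 3) → ℝ,
      Measurable η → (∀ x ∈ Ω, 0 ≤ η x) → IntegrableOn η Ω →
      IntegrableOn (fun x => η x * Real.log (η x)) Ω →
      IntegrableOn (fun x => Φ x * η x) Ω →
      (∫ x in Ω, η x * Real.log (η x)) + (∫ x in Ω, Φ x * η x) ≤ C →
      ∫ x in Ω ∩ {x | R < ‖x‖}, η x < ε := by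
  intro ε hε
  obtain ⟨L, hKL, hL⟩ : ∃ L, C + exp (-1) * (∫ x in Ω, exp (-Φ x)) < L * (ε / 2) ∧ 0 < L :=
    (((tendsto_id.atTop_mul_const (half_pos hε)).eventually_gt_atTop _).and
      (eventually_gt_atTop 0)).exists
  have htail : Tendsto (fun R : ℝ => exp (L - 1) * ∫ x in Ω ∩ {x | R < ‖x‖}, exp (-Φ x))
      atTop (𝓝 0) := by
    simpa using (tendsto_setIntegral_inter_norm_gt hexp).const_mul (exp (L - 1))
  obtain ⟨R, hR, hR0⟩ := ((htail.eventually_lt_const (by positivity : 0 < L * (ε / 2))).and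
    (eventually_gt_atTop 0)).exists
  refine ⟨R, hR0, fun η _ hη0 hη hηlog hΦη hC => lt_of_mul_lt_mul_left ?_ hL.le⟩
  have hbound := mul_setIntegral_le_entropy_add (t := Ω ∩ {x | R < ‖x‖}) hΩ
    (hΩ.inter (isOpen_lt continuous_const continuous_norm).measurableSet) Set.inter_subset_left
    hη0 hη hηlog hΦη hexp L
  linarith

theorem stmt_3 (Ω : Set (EuclideanSpace ℝ (Fin 3))) (hΩ : MeasurableSet Ω)
    (Φ : EuclideanSpace ℝ (Fin 3) → ℝ) (hΦm : Measurable Φ) (hΦ0 : ∀ x ∈ Ω, 0 ≤ Φ x)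
    (hexp : IntegrableOn (fun x => Real.exp (-Φ x)) Ω) (C : ℝ) :
    ∀ ε > 0, ∃ R > 0, ∀ η : EuclideanSpace ℝ (Fin 3) → ℝ,
      Measurable η → (∀ x ∈ Ω, 0 ≤ η x) → IntegrableOn η Ω →
      IntegrableOn (fun x => η x * Real.log (η x)) Ω →
      IntegrableOn (fun x => Φ x * η x) Ω →
      (∫ x in Ω, η x * Real.log (η x)) + (∫ x in Ω, Φ x * η x) ≤ C →
      ∫ x in Ω ∩ {x | R < ‖x‖}, η x < ε :=
  stmt_3_general Ω hΩ Φ hexp C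
end

section
/- Let O ⊆ ℝ^M be a bounded open set, g : ℝ → (-∞, ∞] a lower semicontinuous convex function, and (v_n) a sequence in L¹(O) with v_n ⇀ v weakly in L¹(O), g(v_n) ∈ L¹(O) for each n, and g(v_n) ⇀ h weakly in L¹(O). Then g(v) ≤ h a.e. on O, g(v) ∈ L¹(O), and ∫_O g(v) dy ≤ liminf_{n→∞} ∫_O g(v_n) dy. -/
open MeasureTheory Real Filter

/-! The pairs `(vₙ, g ∘ vₙ)` take values a.e. in the epigraph of `g`, a closed convex subset of
`ℝ × ℝ`. Such a set is the intersection of countably many closed half-planes (Hahn–Banach plus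
Lindelöf), and a half-plane constraint passes to weak limits by testing against indicators of
measurable sets. Hence `(v, h)` lies a.e. in the epigraph, i.e. `g ∘ v ≤ h`. An affine minorant
of `g` bounds `g ∘ v` from below, which gives integrability, and testing against `1` gives
`∫ g ∘ v ≤ ∫ h = lim ∫ g ∘ vₙ`. -/

open Set Topology

theorem IsClosed.exists_countable_halfspaces {E : Type*} [NormedAddCommGroup E]
    [NormedSpace ℝ E] [SecondCountableTopology E] {K : Set E} (hKc : Convex ℝ K)
    (hKcl : IsClosed K) :
    ∃ T : Set ((E →L[ℝ] ℝ) × ℝ), T.Countable ∧ (∀ i ∈ T, ∀ p ∈ K, i.2 ≤ i.1 p) ∧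
      ∀ p, (∀ i ∈ T, i.2 ≤ i.1 p) → p ∈ K := by
  let ι := {i : (E →L[ℝ] ℝ) × ℝ // ∀ p ∈ K, i.2 ≤ i.1 p}
  obtain ⟨T, hTc, hT⟩ := TopologicalSpace.isOpen_iUnion_countable
    (fun i : ι => {p | i.1.1 p < i.1.2}) fun i => isOpen_lt i.1.1.continuous continuous_const
  refine ⟨Subtype.val '' T, hTc.image _, ?_, fun p hp => ?_⟩
  · rintro _ ⟨i, -, rfl⟩
    exact i.2
  by_contra hpK
  obtain ⟨f, c, hfp, hfK⟩ := geometric_hahn_banach_point_closed hKc hKcl hpK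
  have hp' : p ∈ ⋃ i : ι, {p | i.1.1 p < i.1.2} :=
    mem_iUnion.2 ⟨⟨(f, c), fun q hq => (hfK q hq).le⟩, hfp⟩
  rw [← hT] at hp'
  obtain ⟨i, hiT, hpi⟩ := mem_iUnion₂.1 hp'
  exact (hp i.1 ⟨i, hiT, rfl⟩).not_gt hpi

section WeakLimits

variable {X : Type*} [MeasurableSpace X] {μ : Measure X}

theorem tendsto_setIntegral_of_tendsto_integral_mul {w : ℕ → X → ℝ} {w' : X → ℝ}
    (hw : ∀ φ : X → ℝ, Measurable φ → (∃ c, ∀ x, |φ x| ≤ c) →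
      Tendsto (fun n => ∫ x, w n x * φ x ∂μ) atTop (𝓝 (∫ x, w' x * φ x ∂μ)))
    {s : Set X} (hs : MeasurableSet s) :
    Tendsto (fun n => ∫ x in s, w n x ∂μ) atTop (𝓝 (∫ x in s, w' x ∂μ)) := by
  have hind : ∀ u : X → ℝ, ∫ x in s, u x ∂μ = ∫ x, u x * s.indicator 1 x ∂μ := fun u => by
    rw [← integral_indicator hs]
    congr 1 with x
    by_cases hx : x ∈ s <;> simp [hx]
  simp only [hind]
  refine hw _ (measurable_one.indicator hs) ⟨1, fun x => ?_⟩
  by_cases hx : x ∈ s <;> simp [hx]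

variable [IsFiniteMeasure μ]

theorem ae_le_of_tendsto_setIntegral {w : ℕ → X → ℝ} {w' : X → ℝ} {c : ℝ}
    (hw : ∀ n, Integrable (w n) μ) (hw' : Integrable w' μ) (hc : ∀ n, ∀ᵐ x ∂μ, c ≤ w n x)
    (hlim : ∀ s, MeasurableSet s →
      Tendsto (fun n => ∫ x in s, w n x ∂μ) atTop (𝓝 (∫ x in s, w' x ∂μ))) :
    ∀ᵐ x ∂μ, c ≤ w' x := by
  refine ae_le_of_forall_setIntegral_le (integrable_const c) hw' fun s hs _ => ?_
  exact ge_of_tendsto' (hlim s hs) fun n =>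
    setIntegral_mono_ae (integrable_const c).integrableOn (hw n).integrableOn (hc n)

theorem ae_mem_of_tendsto_setIntegral {E : Type*} [NormedAddCommGroup E] [NormedSpace ℝ E]
    [CompleteSpace E] [SecondCountableTopology E] {K : Set E} (hKc : Convex ℝ K) (hKcl : IsClosed K)
    {u : ℕ → X → E} {u' : X → E} (hu : ∀ n, Integrable (u n) μ) (hu' : Integrable u' μ)
    (hK : ∀ n, ∀ᵐ x ∂μ, u n x ∈ K)
    (hlim : ∀ s, MeasurableSet s →
      Tendsto (fun n => ∫ x in s, u n x ∂μ) atTop (𝓝 (∫ x in s, u' x ∂μ))) :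
    ∀ᵐ x ∂μ, u' x ∈ K := by
  obtain ⟨T, hTc, hTK, hT⟩ := hKcl.exists_countable_halfspaces hKc
  have hhalf : ∀ i ∈ T, ∀ᵐ x ∂μ, i.2 ≤ i.1 (u' x) := fun i hi =>
    ae_le_of_tendsto_setIntegral (fun n => i.1.integrable_comp (hu n)) (i.1.integrable_comp hu')
      (fun n => (hK n).mono fun x hx => hTK i hi _ hx) fun s hs => by
        simp only [i.1.integral_comp_comm (hu _).integrableOn,
          i.1.integral_comp_comm hu'.integrableOn]
        exact (i.1.continuous.tendsto _).comp (hlim s hs)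
  filter_upwards [(ae_ball_iff hTc).2 hhalf] with x hx using hT _ hx

end WeakLimits

-- Taken in `ℝ × ℝ` rather than `ℝ × EReal`, so that Hahn–Banach separation applies.
def realEpigraph (g : ℝ → EReal) : Set (ℝ × ℝ) := {p | g p.1 ≤ p.2}

section Epigraph

variable {g : ℝ → EReal}

theorem isClosed_realEpigraph (hg : LowerSemicontinuous g) : IsClosed (realEpigraph g) :=
  hg.isClosed_epigraph.preimage
    (continuous_fst.prodMk (continuous_coe_real_ereal.comp continuous_snd))

theorem convex_realEpigraph (hg : ∀ z w t : ℝ, 0 ≤ t → t ≤ 1 →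
      g (t * z + (1 - t) * w) ≤ (t : EReal) * g z + ((1 - t : ℝ) : EReal) * g w) :
    Convex ℝ (realEpigraph g) := by
  rintro ⟨z, s⟩ hp ⟨w, r⟩ hq t τ ht hτ htτ
  obtain rfl : τ = 1 - t := by linarith
  change g (t * z + (1 - t) * w) ≤ ((t * s + (1 - t) * r : ℝ) : EReal)
  calc g (t * z + (1 - t) * w) ≤ (t : EReal) * g z + ((1 - t : ℝ) : EReal) * g w :=
        hg z w t ht (by linarith)
    _ ≤ (t : EReal) * s + ((1 - t : ℝ) : EReal) * r := by
        gcongr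
        exacts [hp, hq]
    _ = ((t * s + (1 - t) * r : ℝ) : EReal) := by norm_cast

theorem mk_toReal_mem_realEpigraph {z : ℝ} (hbot : g z ≠ ⊥) (htop : g z ≠ ⊤) :
    (z, (g z).toReal) ∈ realEpigraph g :=
  (EReal.coe_toReal htop hbot).ge

theorem exists_affine_le_of_realEpigraph (hbot : ∀ z, g z ≠ ⊥)
    (hc : Convex ℝ (realEpigraph g)) (hcl : IsClosed (realEpigraph g)) :
    ∃ a b : ℝ, ∀ z, ((a * z + b : ℝ) : EReal) ≤ g z := by
  by_cases htop : ∀ z, g z = ⊤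
  · exact ⟨0, 0, fun z => by simp [htop z]⟩
  obtain ⟨z₀, hz₀⟩ := not_forall.1 htop
  set t₀ := (g z₀).toReal
  have hp₀ : (z₀, t₀ - 1) ∉ realEpigraph g := by
    intro hmem
    have : ((t₀ : ℝ) : EReal) ≤ ((t₀ - 1 : ℝ) : EReal) :=
      (EReal.coe_toReal hz₀ (hbot z₀)).le.trans hmem
    linarith [EReal.coe_le_coe_iff.1 this]
  obtain ⟨f, c, hfp₀, hfE⟩ := geometric_hahn_banach_point_closed hc hcl hp₀
  have hf : ∀ z t : ℝ, f (z, t) = z * f (1, 0) + t * f (0, 1) := fun z t => by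
    rw [show ((z, t) : ℝ × ℝ) = z • (1, 0) + t • (0, 1) by simp, map_add, map_smul, map_smul,
      smul_eq_mul, smul_eq_mul]
  have hβ : 0 < f (0, 1) := by
    have := hfE _ (mk_toReal_mem_realEpigraph (hbot z₀) hz₀)
    rw [hf] at this hfp₀
    linarith
  refine ⟨-f (1, 0) / f (0, 1), c / f (0, 1), fun z => ?_⟩
  by_cases hz : g z = ⊤
  · simp [hz]
  have hcz := hfE _ (mk_toReal_mem_realEpigraph (hbot z) hz)
  rw [hf] at hcz
  rw [← EReal.coe_toReal hz (hbot z), EReal.coe_le_coe_iff]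
  have : -f (1, 0) / f (0, 1) * z + c / f (0, 1) = (c - z * f (1, 0)) / f (0, 1) := by ring
  rw [this, div_le_iff₀ hβ]
  linarith

end Epigraph

theorem stmt_9_general (M : ℕ) (O : Set (Fin M → ℝ))
    (hOb : Bornology.IsBounded O) (g : ℝ → EReal)
    (hg_ne_bot : ∀ z, g z ≠ ⊥)
    (hg_lsc : LowerSemicontinuous g)
    (hg_conv : ∀ z w t : ℝ, 0 ≤ t → t ≤ 1 →
      g (t * z + (1 - t) * w) ≤ (t : EReal) * g z + ((1 - t : ℝ) : EReal) * g w)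
    (v : ℕ → (Fin M → ℝ) → ℝ) (vlim : (Fin M → ℝ) → ℝ) (h : (Fin M → ℝ) → ℝ)
    (hv_int : ∀ n, IntegrableOn (v n) O)
    (hvlim_int : IntegrableOn vlim O)
    (hgv_fin : ∀ n, ∀ᵐ y ∂(volume.restrict O), g (v n y) ≠ ⊤)
    (hgv_int : ∀ n, IntegrableOn (fun y => (g (v n y)).toReal) O)
    (hh_int : IntegrableOn h O)
    (hv_weak : ∀ φ : (Fin M → ℝ) → ℝ, Measurable φ → (∃ c, ∀ y, |φ y| ≤ c) →
      Tendsto (fun n => ∫ y in O, v n y * φ y) atTop (nhds (∫ y in O, vlim y * φ y)))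
    (hgv_weak : ∀ φ : (Fin M → ℝ) → ℝ, Measurable φ → (∃ c, ∀ y, |φ y| ≤ c) →
      Tendsto (fun n => ∫ y in O, (g (v n y)).toReal * φ y) atTop
        (nhds (∫ y in O, h y * φ y))) :
    (∀ᵐ y ∂(volume.restrict O), g (vlim y) ≤ (h y : EReal)) ∧
    (∀ᵐ y ∂(volume.restrict O), g (vlim y) ≠ ⊤) ∧
    IntegrableOn (fun y => (g (vlim y)).toReal) O ∧
    (∫ y in O, (g (vlim y)).toReal)
      ≤ liminf (fun n => ∫ y in O, (g (v n y)).toReal) atTop := by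
  have : IsFiniteMeasure (volume.restrict O) := isFiniteMeasure_restrict.2 hOb.measure_lt_top.ne
  have hEc := convex_realEpigraph hg_conv
  have hEcl := isClosed_realEpigraph hg_lsc
  have hle : ∀ᵐ y ∂(volume.restrict O), g (vlim y) ≤ (h y : EReal) := by
    refine ae_mem_of_tendsto_setIntegral hEc hEcl (u := fun n y => (v n y, (g (v n y)).toReal))
      (fun n => (hv_int n).prodMk (hgv_int n)) (hvlim_int.prodMk hh_int)
      (fun n => (hgv_fin n).mono fun y hy => mk_toReal_mem_realEpigraph (hg_ne_bot _) hy)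
      fun s hs => ?_
    simp only [integral_pair (hv_int _).integrableOn (hgv_int _).integrableOn,
      integral_pair hvlim_int.integrableOn hh_int.integrableOn]
    exact (tendsto_setIntegral_of_tendsto_integral_mul hv_weak hs).prodMk_nhds
      (tendsto_setIntegral_of_tendsto_integral_mul hgv_weak hs)
  have hfin : ∀ᵐ y ∂(volume.restrict O), g (vlim y) ≠ ⊤ :=
    hle.mono fun y hy => ne_top_of_le_ne_top (EReal.coe_ne_top _) hy
  have hupper : ∀ᵐ y ∂(volume.restrict O), (g (vlim y)).toReal ≤ h y :=
    hle.mono fun y hy =>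
      (EReal.toReal_le_toReal hy (hg_ne_bot _) (EReal.coe_ne_top _)).trans (EReal.toReal_coe _).le
  obtain ⟨a, b, hab⟩ := exists_affine_le_of_realEpigraph hg_ne_bot hEc hEcl
  have hint : IntegrableOn (fun y => (g (vlim y)).toReal) O := by
    refine integrable_of_le_of_le ?_ (hfin.mono fun y hy => ?_) hupper
      ((hvlim_int.const_mul a).add (integrable_const b)) hh_int
    · exact ((measurable_ereal_toReal.comp hg_lsc.measurable).comp_aemeasurable
        hvlim_int.aemeasurable).aestronglyMeasurable
    · exact (EReal.toReal_coe _).ge.trans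
        (EReal.toReal_le_toReal (hab (vlim y)) (EReal.coe_ne_bot _) hy)
  have hlimit : Tendsto (fun n => ∫ y in O, (g (v n y)).toReal) atTop (𝓝 (∫ y in O, h y)) := by
    simpa using hgv_weak 1 measurable_const ⟨1, by simp⟩
  refine ⟨hle, hfin, hint, ?_⟩
  rw [hlimit.liminf_eq]
  exact integral_mono_ae hint hh_int hupper

theorem stmt_9 (M : ℕ) (hM : 1 ≤ M) (O : Set (Fin M → ℝ)) (hO : IsOpen O)
    (hOb : Bornology.IsBounded O) (g : ℝ → EReal)
    (hg_ne_bot : ∀ z, g z ≠ ⊥)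
    (hg_lsc : LowerSemicontinuous g)
    (hg_conv : ∀ z w t : ℝ, 0 ≤ t → t ≤ 1 →
      g (t * z + (1 - t) * w) ≤ (t : EReal) * g z + ((1 - t : ℝ) : EReal) * g w)
    (v : ℕ → (Fin M → ℝ) → ℝ) (vlim : (Fin M → ℝ) → ℝ) (h : (Fin M → ℝ) → ℝ)
    (hv_int : ∀ n, IntegrableOn (v n) O)
    (hvlim_int : IntegrableOn vlim O)
    (hgv_fin : ∀ n, ∀ᵐ y ∂(volume.restrict O), g (v n y) ≠ ⊤)
    (hgv_int : ∀ n, IntegrableOn (fun y => (g (v n y)).toReal) O)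
    (hh_int : IntegrableOn h O)
    (hv_weak : ∀ φ : (Fin M → ℝ) → ℝ, Measurable φ → (∃ c, ∀ y, |φ y| ≤ c) →
      Tendsto (fun n => ∫ y in O, v n y * φ y) atTop (nhds (∫ y in O, vlim y * φ y)))
    (hgv_weak : ∀ φ : (Fin M → ℝ) → ℝ, Measurable φ → (∃ c, ∀ y, |φ y| ≤ c) →
      Tendsto (fun n => ∫ y in O, (g (v n y)).toReal * φ y) atTop
        (nhds (∫ y in O, h y * φ y))) :
    (∀ᵐ y ∂(volume.restrict O), g (vlim y) ≤ (h y : EReal)) ∧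
    (∀ᵐ y ∂(volume.restrict O), g (vlim y) ≠ ⊤) ∧
    IntegrableOn (fun y => (g (vlim y)).toReal) O ∧
    (∫ y in O, (g (vlim y)).toReal)
      ≤ liminf (fun n => ∫ y in O, (g (v n y)).toReal) atTop :=
  stmt_9_general M O hOb g hg_ne_bot hg_lsc hg_conv v vlim h hv_int hvlim_int hgv_fin hgv_int hh_int
    hv_weak hgv_weak
end

section
/- Let O ⊆ ℝ^M be a bounded open set, g : ℝ → ℝ convex and strictly convex on an open interval (a,b) ⊆ ℝ, and (v_n) a sequence with v_n ⇀ v in L¹(O), g(v_n) ⇀ g(v) in L¹(O) (i.e. the weak limit of g(v_n) equals g(v) a.e.). Then, after passing to a subsequence, v_n(y) → v(y) for a.e. y in the set {y ∈ O : v(y) ∈ (a,b)}. -/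
/-!
With `g'₊` the right derivative of `g`, the Bregman gap `D(x, t) = g t - g x - g'₊ x * (t - x)`
is nonnegative. On `A = {v ∈ (a, b)}` the integral of `D(v, vₙ)` is a combination of
`∫ g(vₙ) 1_A` and `∫ vₙ 1_A g'₊(v)`, and `g'₊(v)` is bounded on `A` by monotonicity, so weak
convergence drives it to `0`. A subsequence then has `D(v, vₙ) → 0` a.e. on `A`, and strict
convexity on `(a, b)` turns this into `vₙ → v`.
-/

open MeasureTheory Filter Set Topology

noncomputable def bregman (g : ℝ → ℝ) (x t : ℝ) : ℝ :=
  g t - g x - derivWithin g (Ioi x) x * (t - x)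

namespace ConvexOn

variable {g : ℝ → ℝ}

theorem monotone_rightDeriv (hg : ConvexOn ℝ univ g) :
    Monotone fun x => derivWithin g (Ioi x) x :=
  monotoneOn_univ.mp (by simpa using hg.monotoneOn_rightDeriv)

theorem bregman_nonneg (hg : ConvexOn ℝ univ g) (x t : ℝ) : 0 ≤ bregman g x t := by
  have hx : x ∈ interior univ := by simp
  rcases lt_trichotomy x t with hxt | rfl | htx
  · have h := hg.rightDeriv_le_slope_of_mem_interior hx (mem_univ t) hxt
    rw [slope_def_field, le_div_iff₀ (sub_pos.2 hxt)] at h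
    unfold bregman; linarith
  · simp [bregman]
  · have h := (hg.slope_le_leftDeriv_of_mem_interior (mem_univ t) hx htx).trans
      (hg.leftDeriv_le_rightDeriv_of_mem_interior hx)
    rw [slope_def_field, div_le_iff₀ (sub_pos.2 htx)] at h
    unfold bregman; linarith

theorem convexOn_bregman (hg : ConvexOn ℝ univ g) (x : ℝ) : ConvexOn ℝ univ (bregman g x) := by
  refine ⟨convex_univ, fun t _ s _ p q hp hq hpq => ?_⟩
  have := hg.2 (mem_univ t) (mem_univ s) hp hq hpq
  simp only [smul_eq_mul, bregman] at this ⊢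
  linear_combination this + (g x - derivWithin g (Ioi x) x * x) * hpq

theorem min_le_of_le_abs_sub {f : ℝ → ℝ} (hf : ConvexOn ℝ univ f) {x e s : ℝ}
    (he : 0 < e) (hr : f x ≤ f (x + e)) (hl : f x ≤ f (x - e)) (hs : e ≤ |s - x|) :
    min (f (x + e)) (f (x - e)) ≤ f s := by
  rcases le_abs'.1 hs with hs | hs
  · exact (min_le_right _ _).trans
      (hf.le_left_of_right_le'' (mem_univ s) (mem_univ x) (by linarith) (by linarith) hl)
  · exact (min_le_left _ _).trans
      (hf.le_right_of_left_le'' (mem_univ x) (mem_univ s) (by linarith) (by linarith) hr)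

end ConvexOn

namespace StrictConvexOn

variable {g : ℝ → ℝ} {S : Set ℝ} {x : ℝ}

theorem bregman_pos (hs : StrictConvexOn ℝ S g) (hx : x ∈ interior S) {t : ℝ} (ht : t ∈ S)
    (hne : t ≠ x) : 0 < bregman g x t := by
  rcases hne.lt_or_gt with htx | hxt
  · have h := (hs.slope_lt_leftDeriv ht (interior_subset hx) htx
      (hs.convexOn.differentiableWithinAt_Iio_of_mem_interior hx)).trans_le
      (hs.convexOn.leftDeriv_le_rightDeriv_of_mem_interior hx)
    rw [slope_def_field, div_lt_iff₀ (sub_pos.2 htx)] at h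
    unfold bregman; linarith
  · have h := hs.rightDeriv_lt_slope (interior_subset hx) ht hxt
      (hs.convexOn.differentiableWithinAt_Ioi_of_mem_interior hx)
    rw [slope_def_field, lt_div_iff₀ (sub_pos.2 hxt)] at h
    unfold bregman; linarith

/-- Strict convexity near `x` makes `x` an isolated zero of `bregman g x`, and convexity
everywhere keeps `bregman g x` away from zero outside every neighbourhood of `x`. -/
theorem tendsto_of_tendsto_bregman {ι : Type*} {l : Filter ι} {t : ι → ℝ}
    (hs : StrictConvexOn ℝ S g) (hg : ConvexOn ℝ univ g) (hx : x ∈ interior S)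
    (h : Tendsto (fun k => bregman g x (t k)) l (𝓝 0)) : Tendsto t l (𝓝 x) := by
  rw [Metric.tendsto_nhds]
  intro ε hε
  obtain ⟨r, hr, hball⟩ := Metric.mem_nhds_iff.1 (mem_interior_iff_mem_nhds.1 hx)
  set e := min ε (r / 2)
  have he : 0 < e := lt_min hε (half_pos hr)
  have her : e < r := (min_le_right _ _).trans_lt (half_lt_self hr)
  have hxe : x + e ∈ S := hball (by simpa [Real.dist_eq, abs_of_pos he] using her)
  have hxe' : x - e ∈ S := hball (by simpa [Real.dist_eq, abs_of_pos he] using her)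
  have hδ : 0 < min (bregman g x (x + e)) (bregman g x (x - e)) :=
    lt_min (hs.bregman_pos hx hxe (by linarith)) (hs.bregman_pos hx hxe' (by linarith))
  have hx0 : bregman g x x = 0 := by simp [bregman]
  filter_upwards [h.eventually (eventually_lt_nhds hδ)] with k hk
  by_contra! hek
  refine hk.not_ge ((hg.convexOn_bregman x).min_le_of_le_abs_sub he ?_ ?_ ?_)
  · rw [hx0]; exact hg.bregman_nonneg _ _
  · rw [hx0]; exact hg.bregman_nonneg _ _
  · rw [← Real.dist_eq]; exact (min_le_left _ _).trans hek

end StrictConvexOn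

theorem indicator_bregman_eq {α : Type*} (g : ℝ → ℝ) (A : Set α) (u w : α → ℝ) (y : α) :
    A.indicator (fun y => bregman g (u y) (w y)) y =
      (g (w y) - g (u y)) * A.indicator 1 y -
        (w y - u y) * A.indicator (fun y => derivWithin g (Ioi (u y)) (u y)) y := by
  by_cases hy : y ∈ A
  · simp only [indicator_of_mem hy, bregman, Pi.one_apply]
    ring
  · simp [hy]

/-- Weak convergence in `L¹(μ)`, tested against bounded measurable functions. -/
def TendstoWeakly {α : Type*} [MeasurableSpace α] (μ : Measure α) (f : ℕ → α → ℝ)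
    (F : α → ℝ) : Prop :=
  ∀ φ : α → ℝ, Measurable φ → (∃ c, ∀ y, |φ y| ≤ c) →
    Tendsto (fun n => ∫ y, f n y * φ y ∂μ) atTop (𝓝 (∫ y, F y * φ y ∂μ))

section Measure

variable {α : Type*} [MeasurableSpace α] {μ : Measure α}

theorem MeasureTheory.Integrable.mul_of_abs_le {f φ : α → ℝ} {c : ℝ} (hf : Integrable f μ)
    (hφ : Measurable φ) (hφb : ∀ y, |φ y| ≤ c) : Integrable (fun y => f y * φ y) μ :=
  hf.mul_bdd hφ.aestronglyMeasurable (ae_of_all _ hφb)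

theorem TendstoWeakly.congr_ae {f : ℕ → α → ℝ} {F F' : α → ℝ} (h : TendstoWeakly μ f F)
    (hF : F =ᵐ[μ] F') : TendstoWeakly μ f F' := by
  intro φ hφ hφb
  have hint : ∫ y, F y * φ y ∂μ = ∫ y, F' y * φ y ∂μ :=
    integral_congr_ae (hF.mono fun y hy => congrArg (· * φ y) hy)
  exact hint ▸ h φ hφ hφb

theorem TendstoWeakly.tendsto_integral_sub_mul {f : ℕ → α → ℝ} {F φ : α → ℝ} {c : ℝ}
    (h : TendstoWeakly μ f F) (hf : ∀ n, Integrable (f n) μ) (hF : Integrable F μ)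
    (hφ : Measurable φ) (hφb : ∀ y, |φ y| ≤ c) :
    Tendsto (fun n => ∫ y, (f n y - F y) * φ y ∂μ) atTop (𝓝 0) := by
  have hlim := (h φ hφ ⟨c, hφb⟩).sub_const (∫ y, F y * φ y ∂μ)
  rw [sub_self] at hlim
  refine hlim.congr fun n => ?_
  simp_rw [sub_mul]
  exact (integral_sub ((hf n).mul_of_abs_le hφ hφb) (hF.mul_of_abs_le hφ hφb)).symm

theorem exists_seq_tendsto_ae_zero_of_tendsto_integral {G : ℕ → α → ℝ}
    (hG : ∀ n, Integrable (G n) μ) (hG0 : ∀ n, 0 ≤ᵐ[μ] G n)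
    (h : Tendsto (fun n => ∫ y, G n y ∂μ) atTop (𝓝 0)) :
    ∃ ψ : ℕ → ℕ, StrictMono ψ ∧ ∀ᵐ y ∂μ, Tendsto (fun k => G (ψ k) y) atTop (𝓝 0) := by
  have hL1 : Tendsto (fun n => eLpNorm (G n - 0) 1 μ) atTop (𝓝 0) := by
    have heq : ∀ n, eLpNorm (G n - 0) 1 μ = ENNReal.ofReal (∫ y, G n y ∂μ) := fun n => by
      rw [sub_zero, eLpNorm_one_eq_lintegral_enorm,
        ofReal_integral_eq_lintegral_ofReal (hG n) (hG0 n)]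
      exact lintegral_congr_ae ((hG0 n).mono fun y hy => Real.enorm_eq_ofReal hy)
    have hlim := ENNReal.tendsto_ofReal h
    rw [ENNReal.ofReal_zero] at hlim
    exact hlim.congr fun n => (heq n).symm
  exact (tendstoInMeasure_of_tendsto_eLpNorm one_ne_zero (fun n => (hG n).aestronglyMeasurable)
    aestronglyMeasurable_const hL1).exists_seq_tendsto_ae

theorem exists_seq_tendsto_ae_indicator_bregman {g : ℝ → ℝ} {a b : ℝ} {v : ℕ → α → ℝ}
    {u : α → ℝ} (hg : ConvexOn ℝ univ g) (hu : Measurable u) (hv_int : ∀ n, Integrable (v n) μ)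
    (hu_int : Integrable u μ) (hgv_int : ∀ n, Integrable (fun y => g (v n y)) μ)
    (hgu_int : Integrable (fun y => g (u y)) μ) (hv : TendstoWeakly μ v u)
    (hgv : TendstoWeakly μ (fun n y => g (v n y)) (fun y => g (u y))) :
    ∃ ψ : ℕ → ℕ, StrictMono ψ ∧ ∀ᵐ y ∂μ, Tendsto
      (fun k => (u ⁻¹' Ioo a b).indicator (fun y => bregman g (u y) (v (ψ k) y)) y)
      atTop (𝓝 0) := by
  set A := u ⁻¹' Ioo a b
  have hA : MeasurableSet A := hu measurableSet_Ioo
  have hd := hg.monotone_rightDeriv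
  set χ : α → ℝ := A.indicator 1
  set φ : α → ℝ := A.indicator fun y => derivWithin g (Ioi (u y)) (u y)
  have hχ : Measurable χ := measurable_one.indicator hA
  have hφ : Measurable φ := (hd.measurable.comp hu).indicator hA
  have hχ_bdd : ∀ y, |χ y| ≤ 1 := fun y => by
    by_cases hy : y ∈ A <;> simp [χ, hy]
  have hφ_bdd : ∀ y, |φ y| ≤ max |derivWithin g (Ioi a) a| |derivWithin g (Ioi b) b| := by
    intro y
    by_cases hy : y ∈ A
    · simp only [φ, indicator_of_mem hy]; exact abs_le_max_abs_abs (hd hy.1.le) (hd hy.2.le)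
    · simp only [φ, indicator_of_notMem hy, abs_zero]; exact le_max_of_le_left (abs_nonneg _)
  have hgχ : ∀ n, Integrable (fun y => (g (v n y) - g (u y)) * χ y) μ := fun n =>
    ((hgv_int n).sub hgu_int).mul_of_abs_le hχ hχ_bdd
  have hvφ : ∀ n, Integrable (fun y => (v n y - u y) * φ y) μ := fun n =>
    ((hv_int n).sub hu_int).mul_of_abs_le hφ hφ_bdd
  have hlim := (hgv.tendsto_integral_sub_mul hgv_int hgu_int hχ hχ_bdd).sub
    (hv.tendsto_integral_sub_mul hv_int hu_int hφ hφ_bdd)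
  rw [sub_zero] at hlim
  have hG : ∀ n, (fun y => A.indicator (fun y => bregman g (u y) (v n y)) y) =
      fun y => (g (v n y) - g (u y)) * χ y - (v n y - u y) * φ y := fun n =>
    funext (indicator_bregman_eq g A u (v n))
  refine exists_seq_tendsto_ae_zero_of_tendsto_integral
    (G := fun n y => A.indicator (fun y => bregman g (u y) (v n y)) y) (fun n => ?_)
    (fun n => ae_of_all _ (indicator_nonneg fun y _ => hg.bregman_nonneg _ _)) ?_
  · rw [hG n]; exact (hgχ n).sub (hvφ n)
  · refine hlim.congr fun n => ?_
    rw [hG n]; exact (integral_sub (hgχ n) (hvφ n)).symm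

end Measure

theorem stmt_10_general (M : ℕ) (O : Set (Fin M → ℝ)) (a b : ℝ) (g : ℝ → ℝ)
    (hg_conv : ConvexOn ℝ Set.univ g)
    (hg_strict : StrictConvexOn ℝ (Set.Ioo a b) g)
    (v : ℕ → (Fin M → ℝ) → ℝ) (vlim : (Fin M → ℝ) → ℝ)
    (hv_int : ∀ n, IntegrableOn (v n) O) (hvlim_int : IntegrableOn vlim O)
    (hgv_int : ∀ n, IntegrableOn (fun y => g (v n y)) O)
    (hgvlim_int : IntegrableOn (fun y => g (vlim y)) O)
    (hv_weak : ∀ φ : (Fin M → ℝ) → ℝ, Measurable φ → (∃ c, ∀ y, |φ y| ≤ c) →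
      Tendsto (fun n => ∫ y in O, v n y * φ y) atTop (nhds (∫ y in O, vlim y * φ y)))
    (hgv_weak : ∀ φ : (Fin M → ℝ) → ℝ, Measurable φ → (∃ c, ∀ y, |φ y| ≤ c) →
      Tendsto (fun n => ∫ y in O, g (v n y) * φ y) atTop
        (nhds (∫ y in O, g (vlim y) * φ y))) :
    ∃ ψ : ℕ → ℕ, StrictMono ψ ∧
      ∀ᵐ y ∂(volume.restrict O), vlim y ∈ Set.Ioo a b →
        Tendsto (fun k => v (ψ k) y) atTop (nhds (vlim y)) := by
  obtain ⟨w, hw_meas, hw⟩ := hvlim_int.aemeasurable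
  have hv : TendstoWeakly (volume.restrict O) v w :=
    TendstoWeakly.congr_ae hv_weak hw
  have hgv : TendstoWeakly (volume.restrict O) (fun n y => g (v n y)) (fun y => g (w y)) :=
    TendstoWeakly.congr_ae hgv_weak (hw.fun_comp g)
  obtain ⟨ψ, hψ, hae⟩ := exists_seq_tendsto_ae_indicator_bregman (a := a) (b := b) hg_conv
    hw_meas hv_int (hvlim_int.congr hw) hgv_int (hgvlim_int.congr (hw.fun_comp g)) hv hgv
  refine ⟨ψ, hψ, ?_⟩
  filter_upwards [hae, hw] with y hy hwy hmem
  rw [hwy] at hmem ⊢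
  simp only [indicator_of_mem (show y ∈ w ⁻¹' Ioo a b from hmem)] at hy
  exact hg_strict.tendsto_of_tendsto_bregman hg_conv (by rwa [interior_Ioo]) hy

theorem stmt_10 (M : ℕ) (hM : 1 ≤ M) (O : Set (Fin M → ℝ)) (hO : IsOpen O)
    (hOb : Bornology.IsBounded O) (a b : ℝ) (hab : a < b) (g : ℝ → ℝ)
    (hg_conv : ConvexOn ℝ Set.univ g)
    (hg_strict : StrictConvexOn ℝ (Set.Ioo a b) g)
    (v : ℕ → (Fin M → ℝ) → ℝ) (vlim : (Fin M → ℝ) → ℝ)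
    (hv_int : ∀ n, IntegrableOn (v n) O) (hvlim_int : IntegrableOn vlim O)
    (hgv_int : ∀ n, IntegrableOn (fun y => g (v n y)) O)
    (hgvlim_int : IntegrableOn (fun y => g (vlim y)) O)
    (hv_weak : ∀ φ : (Fin M → ℝ) → ℝ, Measurable φ → (∃ c, ∀ y, |φ y| ≤ c) →
      Tendsto (fun n => ∫ y in O, v n y * φ y) atTop (nhds (∫ y in O, vlim y * φ y)))
    (hgv_weak : ∀ φ : (Fin M → ℝ) → ℝ, Measurable φ → (∃ c, ∀ y, |φ y| ≤ c) →
      Tendsto (fun n => ∫ y in O, g (v n y) * φ y) atTop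
        (nhds (∫ y in O, g (vlim y) * φ y))) :
    ∃ ψ : ℕ → ℕ, StrictMono ψ ∧
      ∀ᵐ y ∂(volume.restrict O), vlim y ∈ Set.Ioo a b →
        Tendsto (fun k => v (ψ k) y) atTop (nhds (vlim y)) :=
  stmt_10_general M O a b g hg_conv hg_strict v vlim hv_int hvlim_int hgv_int hgvlim_int hv_weak
    hgv_weak
end
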